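/- arXiv:1112.5456 — 2 statements merged into one kernel-verified Lean document; each statement's English description precedes it below -/
import Mathlib

section
/- (Tensor product selective value) Let G₁ = (ϱ₁, σ₁) and G₂ = (ϱ₂, σ₂) be weighted quantum retrieval games on dimensions d₁ and d₂ with finite nonempty answer sets and positive definite reduced density matrices. Define the tensor product game G₁⊗G₂ = (ϱ₁⊗ϱ₂, σ₁⊗σ₂) by (ϱ₁⊗ϱ₂)(s₁,s₂) = ϱ₁(s₁) ⊗ ϱ₂(s₂) (Kronecker product) and (σ₁⊗σ₂)((s₁,s₂),(a₁,a₂)) = σ₁(s₁,a₁)·σ₂(s₂,a₂). Then Sel(G₁⊗G₂) = Sel(G₁)·Sel(G₂). -/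
open Matrix Kronecker
open scoped ComplexOrder
open scoped ComplexOrder

namespace QRG

variable {n S A : Type*}

/-- The normalization `∑_{s,a} Tr[P(a)ϱ(s)]` of the distribution induced by an
indexed ensemble `ϱ` and a selective projection `P`. -/
noncomputable def normZ [Fintype n] [Fintype S] [Fintype A]
    (ϱ : S → Matrix n n ℂ) (P : A → Matrix n n ℂ) : ℝ :=
  ∑ s, ∑ a, (Matrix.trace (P a * ϱ s)).re

/-- The induced probability distribution `⟨ϱ, P⟩(s,a) = Tr[P(a)ϱ(s)] / normZ`. -/
noncomputable def induced [Fintype n] [Fintype S] [Fintype A]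
    (ϱ : S → Matrix n n ℂ) (P : A → Matrix n n ℂ) (s : S) (a : A) : ℝ :=
  (Matrix.trace (P a * ϱ s)).re / normZ ϱ P

/-- The value `Val(G,P) = ∑_{s,a} p(s,a)·σ(s,a)` of the game `G = (ϱ,σ)` with
respect to the projection `P`. -/
noncomputable def val [Fintype n] [Fintype S] [Fintype A]
    (ϱ : S → Matrix n n ℂ) (σ : S → A → ℝ) (P : A → Matrix n n ℂ) : ℝ :=
  ∑ s, ∑ a, induced ϱ P s a * σ s a

/-- The selective value `Sel(G)`: the supremum of `Val(G,P)` over all selective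
projections `P` (families of positive semidefinite matrices) with positive
normalization. -/
noncomputable def sel [Fintype n] [Fintype S] [Fintype A]
    (ϱ : S → Matrix n n ℂ) (σ : S → A → ℝ) : ℝ :=
  sSup {v | ∃ P : A → Matrix n n ℂ,
    (∀ a, (P a).PosSemidef) ∧ 0 < normZ ϱ P ∧ v = val ϱ σ P}

/-- The physical value `Phys(G)`: the supremum of `Val(G,P)` over all physical
projections `P` (selective projections with `∑_a P(a) = 1`). -/
noncomputable def phys [Fintype n] [DecidableEq n] [Fintype S] [Fintype A]
    (ϱ : S → Matrix n n ℂ) (σ : S → A → ℝ) : ℝ :=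
  sSup {v | ∃ P : A → Matrix n n ℂ,
    (∀ a, (P a).PosSemidef) ∧ (∑ a, P a) = 1 ∧ v = val ϱ σ P}

end QRG

open QRG

/-!
Write `ρ = ∑ₛ ϱ(s)` and `M(a) = ∑ₛ σ(s,a) ϱ(s)`. Then `normZ ϱ P = ∑ₐ Re Tr[P(a) ρ]` and
`Val(G,P) · normZ ϱ P = ∑ₐ Re Tr[P(a) M(a)]`, so `Sel(G) ≤ c` as soon as `M(a) ≤ c ρ` in the
Loewner order for every `a`. Conversely, when `ρ` is positive definite, testing `Sel(G)` against
the rank-one projection `|x⟩⟨x|` placed on the single answer `a` gives `M(a) ≤ Sel(G) ρ`.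
These operator inequalities multiply under the Kronecker product, since
`c₁c₂ ρ₁⊗ρ₂ - M₁⊗M₂ = (c₁ρ₁ - M₁)⊗c₂ρ₂ + M₁⊗(c₂ρ₂ - M₂)`, which gives
`Sel(G₁⊗G₂) ≤ Sel(G₁) Sel(G₂)`. The reverse inequality holds because the projection `P₁⊗P₂`
achieves the value `Val(G₁,P₁) · Val(G₂,P₂)`.
-/

namespace Matrix

variable {𝕜 m n : Type*} [RCLike 𝕜]

lemma IsHermitian.posSemidef_of_re_nonneg [Fintype n] {A : Matrix n n 𝕜} (hA : A.IsHermitian)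
    (h : ∀ x, 0 ≤ RCLike.re (star x ⬝ᵥ (A *ᵥ x))) : A.PosSemidef :=
  .of_dotProduct_mulVec_nonneg hA fun x =>
    RCLike.nonneg_iff.mpr ⟨h x, hA.im_star_dotProduct_mulVec_self x⟩

open scoped MatrixOrder in
lemma PosSemidef.trace_mul_nonneg [Fintype n] {A B : Matrix n n 𝕜} (hA : A.PosSemidef)
    (hB : B.PosSemidef) : 0 ≤ (A * B).trace := by
  classical
  obtain ⟨C, rfl⟩ := CStarAlgebra.nonneg_iff_eq_star_mul_self.mp hB.nonneg
  rw [star_eq_conjTranspose, ← mul_assoc, trace_mul_cycle]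
  exact (hA.mul_mul_conjTranspose_same C).trace_nonneg

lemma trace_vecMulVec_star_mul [Fintype n] (x : n → 𝕜) (A : Matrix n n 𝕜) :
    (vecMulVec x (star x) * A).trace = star x ⬝ᵥ (A *ᵥ x) := by
  rw [vecMulVec_mul, trace_vecMulVec, dotProduct_comm, ← dotProduct_mulVec]

lemma sum_prod_kronecker {ι κ : Type*} [Fintype ι] [Fintype κ] (f : ι → Matrix m m 𝕜)
    (g : κ → Matrix n n 𝕜) : ∑ p : ι × κ, f p.1 ⊗ₖ g p.2 = (∑ i, f i) ⊗ₖ ∑ k, g k := by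
  ext ⟨i, j⟩ ⟨k, l⟩
  simp [sum_apply, kroneckerMap_apply, Finset.sum_mul_sum, Fintype.sum_prod_type]

lemma posSemidef_smul_kronecker_sub [Fintype m] [Fintype n] {c₁ c₂ : ℝ} (hc₂ : 0 ≤ c₂)
    {A₁ B₁ : Matrix m m 𝕜} {A₂ B₂ : Matrix n n 𝕜} (h₁ : (c₁ • A₁ - B₁).PosSemidef)
    (hB₁ : B₁.PosSemidef) (hA₂ : A₂.PosSemidef) (h₂ : (c₂ • A₂ - B₂).PosSemidef) :
    ((c₁ * c₂) • (A₁ ⊗ₖ A₂) - B₁ ⊗ₖ B₂).PosSemidef := by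
  have : (c₁ * c₂) • (A₁ ⊗ₖ A₂) - B₁ ⊗ₖ B₂ =
      (c₁ • A₁ - B₁) ⊗ₖ (c₂ • A₂) + B₁ ⊗ₖ (c₂ • A₂ - B₂) := by
    ext ⟨i, j⟩ ⟨k, l⟩
    simp only [sub_apply, add_apply, smul_apply, kroneckerMap_apply, RCLike.real_smul_eq_coe_mul]
    push_cast
    ring
  rw [this]
  exact (h₁.kronecker (hA₂.smul hc₂)).add (hB₁.kronecker h₂)

lemma re_trace_kronecker_mul_kronecker [Fintype m] [Fintype n] {P₁ ϱ₁ : Matrix m m ℂ}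
    {P₂ ϱ₂ : Matrix n n ℂ} (h : (P₁ * ϱ₁).trace.im = 0) :
    ((P₁ ⊗ₖ P₂) * (ϱ₁ ⊗ₖ ϱ₂)).trace.re = (P₁ * ϱ₁).trace.re * (P₂ * ϱ₂).trace.re := by
  rw [← mul_kronecker_mul, trace_kronecker, Complex.mul_re, h, zero_mul, sub_zero]

end Matrix

lemma Real.sSup_mul_sSup_le {X Y Z : Set ℝ} (hX : ∀ x ∈ X, 0 ≤ x) (hY : ∀ y ∈ Y, 0 ≤ y)
    (hZ : ∀ z ∈ Z, 0 ≤ z) (hZ_bdd : BddAbove Z) (hXYZ : ∀ x ∈ X, ∀ y ∈ Y, x * y ∈ Z) :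
    sSup X * sSup Y ≤ sSup Z := by
  have hZ₀ := Real.sSup_nonneg hZ
  rcases (Real.sSup_nonneg hY).eq_or_lt with hY₀ | hY₀
  · rw [← hY₀, mul_zero]
    exact hZ₀
  rw [← le_div_iff₀ hY₀]
  refine Real.sSup_le (fun x hx => ?_) (div_nonneg hZ₀ hY₀.le)
  rw [le_div_iff₀ hY₀, mul_comm]
  rcases (hX x hx).eq_or_lt with rfl | hx₀
  · simpa using hZ₀
  rw [← le_div_iff₀ hx₀]
  refine Real.sSup_le (fun y hy => ?_) (div_nonneg hZ₀ hx₀.le)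
  rw [le_div_iff₀ hx₀, mul_comm]
  exact le_csSup hZ_bdd (hXYZ x hx y hy)

namespace QRG

variable {m n S A S₁ S₂ A₁ A₂ : Type*}

noncomputable def utilityOperator [Fintype S] (ϱ : S → Matrix n n ℂ) (σ : S → A → ℝ) (a : A) :
    Matrix n n ℂ :=
  ∑ s, σ s a • ϱ s

lemma utilityOperator_posSemidef [Fintype S] {ϱ : S → Matrix n n ℂ} {σ : S → A → ℝ}
    (hσ : ∀ s a, 0 ≤ σ s a) (hϱ : ∀ s, (ϱ s).PosSemidef) (a : A) :
    (utilityOperator ϱ σ a).PosSemidef :=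
  Matrix.posSemidef_sum _ fun s _ => (hϱ s).smul (hσ s a)

lemma utilityOperator_kronecker [Fintype S₁] [Fintype S₂] {ϱ₁ : S₁ → Matrix m m ℂ}
    {ϱ₂ : S₂ → Matrix n n ℂ} (σ₁ : S₁ → A₁ → ℝ) (σ₂ : S₂ → A₂ → ℝ) (a : A₁ × A₂) :
    utilityOperator (fun s : S₁ × S₂ => ϱ₁ s.1 ⊗ₖ ϱ₂ s.2)
        (fun s (a : A₁ × A₂) => σ₁ s.1 a.1 * σ₂ s.2 a.2) a =
      utilityOperator ϱ₁ σ₁ a.1 ⊗ₖ utilityOperator ϱ₂ σ₂ a.2 := by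
  simp only [utilityOperator, ← Matrix.sum_prod_kronecker, Matrix.smul_kronecker,
    Matrix.kronecker_smul, mul_smul, smul_comm (σ₂ _ _)]

variable [Fintype m] [Fintype n]

lemma re_trace_mul_nonneg {ϱ : S → Matrix n n ℂ} (hϱ : ∀ s, (ϱ s).PosSemidef)
    {P : A → Matrix n n ℂ} (hP : ∀ a, (P a).PosSemidef) (s : S) (a : A) :
    0 ≤ (P a * ϱ s).trace.re :=
  (Complex.nonneg_iff.mp ((hP a).trace_mul_nonneg (hϱ s))).1

lemma re_trace_kronecker_mul {ϱ₁ : S₁ → Matrix m m ℂ} (ϱ₂ : S₂ → Matrix n n ℂ)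
    (hϱ₁ : ∀ s, (ϱ₁ s).PosSemidef) {P₁ : A₁ → Matrix m m ℂ}
    (hP₁ : ∀ a, (P₁ a).PosSemidef) (P₂ : A₂ → Matrix n n ℂ) (s : S₁ × S₂) (a : A₁ × A₂) :
    ((P₁ a.1 ⊗ₖ P₂ a.2) * (ϱ₁ s.1 ⊗ₖ ϱ₂ s.2)).trace.re =
      (P₁ a.1 * ϱ₁ s.1).trace.re * (P₂ a.2 * ϱ₂ s.2).trace.re :=
  Matrix.re_trace_kronecker_mul_kronecker
    (Complex.nonneg_iff.mp ((hP₁ a.1).trace_mul_nonneg (hϱ₁ s.1))).2.symm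

variable [Fintype S] [Fintype A]

/-- `sel ϱ σ` is, by definition, `sSup (valueSet ϱ σ)`. -/
def valueSet (ϱ : S → Matrix n n ℂ) (σ : S → A → ℝ) : Set ℝ :=
  {v | ∃ P : A → Matrix n n ℂ, (∀ a, (P a).PosSemidef) ∧ 0 < normZ ϱ P ∧ v = val ϱ σ P}

lemma normZ_eq_sum_re_trace (ϱ : S → Matrix n n ℂ) (P : A → Matrix n n ℂ) :
    normZ ϱ P = ∑ a, (P a * ∑ s, ϱ s).trace.re := by
  simp only [normZ, Matrix.mul_sum, Matrix.trace_sum, Complex.re_sum]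
  exact Finset.sum_comm

lemma val_mul_normZ (ϱ : S → Matrix n n ℂ) (σ : S → A → ℝ) {P : A → Matrix n n ℂ}
    (hZ : normZ ϱ P ≠ 0) :
    val ϱ σ P * normZ ϱ P = ∑ a, (P a * utilityOperator ϱ σ a).trace.re := by
  simp only [val, induced, utilityOperator, Finset.sum_mul, Matrix.mul_sum, Matrix.trace_sum,
    Complex.re_sum, Matrix.mul_smul, Matrix.trace_smul, Complex.real_smul, Complex.re_ofReal_mul]
  rw [Finset.sum_comm]
  refine Finset.sum_congr rfl fun a _ => Finset.sum_congr rfl fun s _ => ?_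
  field_simp

lemma sum_re_trace_single_mul [DecidableEq A] (a : A) (Q : Matrix n n ℂ)
    (X : A → Matrix n n ℂ) :
    ∑ b, ((Pi.single a Q : A → Matrix n n ℂ) b * X b).trace.re = (Q * X a).trace.re := by
  rw [Fintype.sum_eq_single a fun b hb => by simp [Pi.single_eq_of_ne hb], Pi.single_eq_same]

section Bounds

variable {ϱ : S → Matrix n n ℂ} {σ : S → A → ℝ}

lemma induced_le_one (hϱ : ∀ s, (ϱ s).PosSemidef) {P : A → Matrix n n ℂ}
    (hP : ∀ a, (P a).PosSemidef) (hZ : 0 < normZ ϱ P) (s : S) (a : A) :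
    induced ϱ P s a ≤ 1 := by
  have hnn := re_trace_mul_nonneg hϱ hP
  rw [induced, div_le_one hZ]
  calc (P a * ϱ s).trace.re ≤ ∑ a', (P a' * ϱ s).trace.re :=
        Finset.single_le_sum (fun a' _ => hnn s a') (Finset.mem_univ a)
    _ ≤ normZ ϱ P :=
        Finset.single_le_sum (f := fun s => ∑ a', (P a' * ϱ s).trace.re)
          (fun s' _ => Finset.sum_nonneg fun a' _ => hnn s' a') (Finset.mem_univ s)

lemma nonneg_of_mem_valueSet (hσ : ∀ s a, 0 ≤ σ s a) (hϱ : ∀ s, (ϱ s).PosSemidef) {v : ℝ}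
    (hv : v ∈ valueSet ϱ σ) : 0 ≤ v := by
  obtain ⟨P, hP, hZ, rfl⟩ := hv
  exact Finset.sum_nonneg fun s _ => Finset.sum_nonneg fun a _ =>
    mul_nonneg (div_nonneg (re_trace_mul_nonneg hϱ hP s a) hZ.le) (hσ s a)

lemma bddAbove_valueSet (hσ : ∀ s a, 0 ≤ σ s a) (hϱ : ∀ s, (ϱ s).PosSemidef) :
    BddAbove (valueSet ϱ σ) := by
  refine ⟨∑ s, ∑ a, σ s a, ?_⟩
  rintro _ ⟨P, hP, hZ, rfl⟩
  exact Finset.sum_le_sum fun s _ => Finset.sum_le_sum fun a _ =>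
    mul_le_of_le_one_left (hσ s a) (induced_le_one hϱ hP hZ s a)

lemma sel_nonneg (hσ : ∀ s a, 0 ≤ σ s a) (hϱ : ∀ s, (ϱ s).PosSemidef) : 0 ≤ sel ϱ σ :=
  Real.sSup_nonneg fun _ => nonneg_of_mem_valueSet hσ hϱ

lemma val_le_of_posSemidef {c : ℝ}
    (hc : ∀ a, (c • ∑ s, ϱ s - utilityOperator ϱ σ a).PosSemidef) {P : A → Matrix n n ℂ}
    (hP : ∀ a, (P a).PosSemidef) (hZ : 0 < normZ ϱ P) : val ϱ σ P ≤ c := by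
  rw [← mul_le_mul_iff_of_pos_right hZ, val_mul_normZ ϱ σ hZ.ne', normZ_eq_sum_re_trace,
    Finset.mul_sum]
  refine Finset.sum_le_sum fun a _ => ?_
  have hnn := (Complex.nonneg_iff.mp ((hP a).trace_mul_nonneg (hc a))).1
  simpa [Matrix.mul_sub, Matrix.trace_sub] using hnn

lemma sel_le_of_posSemidef {c : ℝ} (hc₀ : 0 ≤ c)
    (hc : ∀ a, (c • ∑ s, ϱ s - utilityOperator ϱ σ a).PosSemidef) : sel ϱ σ ≤ c :=
  Real.sSup_le (by rintro _ ⟨P, hP, hZ, rfl⟩; exact val_le_of_posSemidef hc hP hZ) hc₀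

lemma posSemidef_sel_smul_sub (hσ : ∀ s a, 0 ≤ σ s a) (hϱ : ∀ s, (ϱ s).PosSemidef)
    (hρ : (∑ s, ϱ s).PosDef) (a : A) :
    (sel ϱ σ • ∑ s, ϱ s - utilityOperator ϱ σ a).PosSemidef := by
  classical
  refine ((hρ.posSemidef.smul (sel_nonneg hσ hϱ)).isHermitian.sub
    (utilityOperator_posSemidef hσ hϱ a).isHermitian).posSemidef_of_re_nonneg fun x => ?_
  rcases eq_or_ne x 0 with rfl | hx
  · simp
  set P : A → Matrix n n ℂ := Pi.single a (Matrix.vecMulVec x (star x))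
  have hP : ∀ b, (P b).PosSemidef := fun b => by
    rcases eq_or_ne b a with rfl | hb
    · simpa [P] using Matrix.posSemidef_vecMulVec_self_star x
    · simpa [P, Pi.single_eq_of_ne hb] using Matrix.PosSemidef.zero
  have hZ : normZ ϱ P = (star x ⬝ᵥ ((∑ s, ϱ s) *ᵥ x)).re := by
    rw [normZ_eq_sum_re_trace, sum_re_trace_single_mul, Matrix.trace_vecMulVec_star_mul]
  have hZ₀ : 0 < normZ ϱ P := hZ ▸ hρ.re_dotProduct_pos hx
  have hval := val_mul_normZ ϱ σ hZ₀.ne'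
  rw [sum_re_trace_single_mul, Matrix.trace_vecMulVec_star_mul] at hval
  have hle : val ϱ σ P ≤ sel ϱ σ := le_csSup (bddAbove_valueSet hσ hϱ) ⟨P, hP, hZ₀, rfl⟩
  have hbound := mul_le_mul_of_nonneg_right hle hZ₀.le
  simp only [Matrix.sub_mulVec, Matrix.smul_mulVec, dotProduct_sub, dotProduct_smul, map_sub,
    RCLike.re_to_complex, Complex.smul_re, smul_eq_mul]
  rw [← hZ, ← hval]
  linarith

end Bounds

section Tensor

variable [Fintype S₁] [Fintype S₂] [Fintype A₁] [Fintype A₂] {ϱ₁ : S₁ → Matrix m m ℂ}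
  {ϱ₂ : S₂ → Matrix n n ℂ}

lemma normZ_kronecker (hϱ₁ : ∀ s, (ϱ₁ s).PosSemidef) {P₁ : A₁ → Matrix m m ℂ}
    (hP₁ : ∀ a, (P₁ a).PosSemidef) (P₂ : A₂ → Matrix n n ℂ) :
    normZ (fun s : S₁ × S₂ => ϱ₁ s.1 ⊗ₖ ϱ₂ s.2) (fun a : A₁ × A₂ => P₁ a.1 ⊗ₖ P₂ a.2) =
      normZ ϱ₁ P₁ * normZ ϱ₂ P₂ := by
  simp only [normZ, re_trace_kronecker_mul ϱ₂ hϱ₁ hP₁, Fintype.sum_prod_type, Finset.sum_mul_sum]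

lemma val_kronecker (hϱ₁ : ∀ s, (ϱ₁ s).PosSemidef) {P₁ : A₁ → Matrix m m ℂ}
    (hP₁ : ∀ a, (P₁ a).PosSemidef) (P₂ : A₂ → Matrix n n ℂ) (σ₁ : S₁ → A₁ → ℝ)
    (σ₂ : S₂ → A₂ → ℝ) :
    val (fun s : S₁ × S₂ => ϱ₁ s.1 ⊗ₖ ϱ₂ s.2) (fun s (a : A₁ × A₂) => σ₁ s.1 a.1 * σ₂ s.2 a.2)
        (fun a : A₁ × A₂ => P₁ a.1 ⊗ₖ P₂ a.2) =
      val ϱ₁ σ₁ P₁ * val ϱ₂ σ₂ P₂ := by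
  simp only [val, induced, normZ_kronecker hϱ₁ hP₁, re_trace_kronecker_mul ϱ₂ hϱ₁ hP₁,
    Fintype.sum_prod_type, Finset.sum_mul_sum, mul_div_mul_comm, mul_mul_mul_comm]

lemma mul_mem_valueSet_kronecker (hϱ₁ : ∀ s, (ϱ₁ s).PosSemidef) {σ₁ : S₁ → A₁ → ℝ}
    {σ₂ : S₂ → A₂ → ℝ} {v₁ v₂ : ℝ} (hv₁ : v₁ ∈ valueSet ϱ₁ σ₁) (hv₂ : v₂ ∈ valueSet ϱ₂ σ₂) :
    v₁ * v₂ ∈ valueSet (fun s : S₁ × S₂ => ϱ₁ s.1 ⊗ₖ ϱ₂ s.2)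
      (fun s (a : A₁ × A₂) => σ₁ s.1 a.1 * σ₂ s.2 a.2) := by
  obtain ⟨P₁, hP₁, hZ₁, rfl⟩ := hv₁
  obtain ⟨P₂, hP₂, hZ₂, rfl⟩ := hv₂
  exact ⟨fun a => P₁ a.1 ⊗ₖ P₂ a.2, fun a => (hP₁ a.1).kronecker (hP₂ a.2),
    by rw [normZ_kronecker hϱ₁ hP₁]; exact mul_pos hZ₁ hZ₂, (val_kronecker hϱ₁ hP₁ P₂ σ₁ σ₂).symm⟩

end Tensor

end QRG

theorem sel_tensor_product_general {d₁ d₂ : ℕ} {S₁ S₂ A₁ A₂ : Type}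
    [Fintype S₁] [Fintype S₂] [Fintype A₁] [Fintype A₂]
    (ϱ₁ : S₁ → Matrix (Fin d₁) (Fin d₁) ℂ) (σ₁ : S₁ → A₁ → ℝ)
    (ϱ₂ : S₂ → Matrix (Fin d₂) (Fin d₂) ℂ) (σ₂ : S₂ → A₂ → ℝ)
    (hσ₁ : ∀ s a, 0 ≤ σ₁ s a) (hσ₂ : ∀ s a, 0 ≤ σ₂ s a)
    (hpsd₁ : ∀ s, (ϱ₁ s).PosSemidef) (hpsd₂ : ∀ s, (ϱ₂ s).PosSemidef)
    (hpd₁ : (∑ s, ϱ₁ s).PosDef) (hpd₂ : (∑ s, ϱ₂ s).PosDef) :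
    sel (fun s : S₁ × S₂ => ϱ₁ s.1 ⊗ₖ ϱ₂ s.2)
        (fun s (a : A₁ × A₂) => σ₁ s.1 a.1 * σ₂ s.2 a.2) =
      sel ϱ₁ σ₁ * sel ϱ₂ σ₂ := by
  have hσ : ∀ (s : S₁ × S₂) (a : A₁ × A₂), 0 ≤ σ₁ s.1 a.1 * σ₂ s.2 a.2 :=
    fun s a => mul_nonneg (hσ₁ _ _) (hσ₂ _ _)
  have hpsd : ∀ s : S₁ × S₂, (ϱ₁ s.1 ⊗ₖ ϱ₂ s.2).PosSemidef :=
    fun s => (hpsd₁ s.1).kronecker (hpsd₂ s.2)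
  refine le_antisymm ?_ ?_
  · refine sel_le_of_posSemidef (mul_nonneg (sel_nonneg hσ₁ hpsd₁) (sel_nonneg hσ₂ hpsd₂))
      fun a => ?_
    rw [Matrix.sum_prod_kronecker, utilityOperator_kronecker]
    exact Matrix.posSemidef_smul_kronecker_sub (sel_nonneg hσ₂ hpsd₂)
      (posSemidef_sel_smul_sub hσ₁ hpsd₁ hpd₁ a.1) (utilityOperator_posSemidef hσ₁ hpsd₁ a.1)
      hpd₂.posSemidef (posSemidef_sel_smul_sub hσ₂ hpsd₂ hpd₂ a.2)
  · exact Real.sSup_mul_sSup_le (fun _ => nonneg_of_mem_valueSet hσ₁ hpsd₁)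
      (fun _ => nonneg_of_mem_valueSet hσ₂ hpsd₂) (fun _ => nonneg_of_mem_valueSet hσ hpsd)
      (bddAbove_valueSet hσ hpsd) fun _ hv₁ _ hv₂ => mul_mem_valueSet_kronecker hpsd₁ hv₁ hv₂

/-- Tensor product selective value: the selective value of the tensor product of two
weighted quantum retrieval games is the product of the individual selective values. -/
theorem sel_tensor_product {d₁ d₂ : ℕ} {S₁ S₂ A₁ A₂ : Type}
    [Fintype S₁] [Fintype S₂] [Fintype A₁] [Fintype A₂]
    [Nonempty S₁] [Nonempty S₂] [Nonempty A₁] [Nonempty A₂]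
    (ϱ₁ : S₁ → Matrix (Fin d₁) (Fin d₁) ℂ) (σ₁ : S₁ → A₁ → ℝ)
    (ϱ₂ : S₂ → Matrix (Fin d₂) (Fin d₂) ℂ) (σ₂ : S₂ → A₂ → ℝ)
    (hσ₁ : ∀ s a, 0 ≤ σ₁ s a) (hσ₂ : ∀ s a, 0 ≤ σ₂ s a)
    (hpsd₁ : ∀ s, (ϱ₁ s).PosSemidef) (hpsd₂ : ∀ s, (ϱ₂ s).PosSemidef)
    (htr₁ : ∑ s, (ϱ₁ s).trace = 1) (htr₂ : ∑ s, (ϱ₂ s).trace = 1)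
    (hpd₁ : (∑ s, ϱ₁ s).PosDef) (hpd₂ : (∑ s, ϱ₂ s).PosDef) :
    sel (fun s : S₁ × S₂ => ϱ₁ s.1 ⊗ₖ ϱ₂ s.2)
        (fun s (a : A₁ × A₂) => σ₁ s.1 a.1 * σ₂ s.2 a.2) =
      sel ϱ₁ σ₁ * sel ϱ₂ σ₂ :=
  sel_tensor_product_general ϱ₁ σ₁ ϱ₂ σ₂ hσ₁ hσ₂ hpsd₁ hpsd₂ hpd₁ hpd₂
end

section
/- (Value of the conjunction qubit-pair game) Consider the quantum retrieval game G_∧ = (ϱ, σ_∧) on ℂ⁴ with the eight-state qubit-pair ensemble, answer set A = {0,1}²×{0,1}², and utility σ_∧(s, (a_X, a_Z)) = σ_X(s, a_X)·σ_Z(s, a_Z). Then Sel(G_∧) = 3/4. -/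
open Matrix
open scoped ComplexOrder
open scoped ComplexOrder

open QRG

/-- The `Z`-eigenstates `|0⟩` (for `false`) and `|1⟩` (for `true`) of a qubit. -/
noncomputable def zket (b : Bool) : Fin 2 → ℂ :=
  fun i => if i = (if b then 1 else 0) then 1 else 0

/-- The `X`-eigenstates `|+⟩` (for `false`) and `|−⟩` (for `true`) of a qubit. -/
noncomputable def xket (b : Bool) : Fin 2 → ℂ :=
  fun i => (if b = true ∧ i = 1 then (-1 : ℂ) else 1) * ((Real.sqrt 2 : ℂ))⁻¹

/-- The eight qubit-pair states: `s = (w, zb, xb)` encodes the state `|z,x⟩` (when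
`w = false`) or `|x,z⟩` (when `w = true`), where `z` is the `Z`-eigenstate labelled by
`zb` and `x` is the `X`-eigenstate labelled by `xb`. -/
noncomputable def pairKet (s : Bool × Bool × Bool) : Fin 2 × Fin 2 → ℂ :=
  fun p => if s.1 then xket s.2.2 p.1 * zket s.2.1 p.2
           else zket s.2.1 p.1 * xket s.2.2 p.2

/-- The eight-state qubit-pair indexed ensemble `ϱ(s) = (1/8)|s⟩⟨s|` on `ℂ⁴`. -/
noncomputable def pairEns (s : Bool × Bool × Bool) :
    Matrix (Fin 2 × Fin 2) (Fin 2 × Fin 2) ℂ :=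
  ((1 : ℂ)/8) • Matrix.vecMulVec (pairKet s) (star (pairKet s))

/-- The `Z`-axis utility: the answer bit at the position where the state carries a
`Z`-eigenstate must agree with that eigenstate. -/
noncomputable def sigmaZ (s : Bool × Bool × Bool) (a : Bool × Bool) : ℝ :=
  if (if s.1 then a.2 else a.1) = s.2.1 then 1 else 0

/-- The `X`-axis utility: the answer bit at the position where the state carries an
`X`-eigenstate must agree with that eigenstate. -/
noncomputable def sigmaX (s : Bool × Bool × Bool) (a : Bool × Bool) : ℝ :=
  if (if s.1 then a.1 else a.2) = s.2.2 then 1 else 0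

/-!
For every answer `a`, the dual certificate `D(a) = ∑ₛ (3/4 − σ∧(s,a)) ϱ(s)` is positive
semidefinite, so `Tr[P(a) D(a)] ≥ 0`; summed over `a` this says `Val(G_∧, P) ≤ 3/4`.
The ensemble sums to `I/4`, and each answer wins on exactly two states `u`, `v`, one from each of
the product bases `Z ⊗ X` and `X ⊗ Z`; hence `D(a) = (1/8) (3/2 · I − |u⟩⟨u| − |v⟩⟨v|)`. As `Z` and
`X` are mutually unbiased, `|⟨u, v⟩| = 1/2`, and the largest eigenvalue of `|u⟩⟨u| + |v⟩⟨v|` is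
`1 + |⟨u, v⟩| = 3/2`. Projecting a single answer onto the corresponding eigenvector `u + v`
attains `3/4`.
-/

open scoped InnerProductSpace

theorem Matrix.PosSemidef.trace_mul_nonneg_s16 {𝕜 n : Type*} [RCLike 𝕜] [Fintype n] [DecidableEq n]
    {P Q : Matrix n n 𝕜} (hP : P.PosSemidef) (hQ : Q.PosSemidef) : 0 ≤ (P * Q).trace := by
  open scoped MatrixOrder in
  obtain ⟨B, rfl⟩ := CStarAlgebra.nonneg_iff_eq_star_mul_self.mp hP.nonneg
  rw [Matrix.mul_assoc, trace_mul_comm]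
  exact (hQ.mul_mul_conjTranspose_same B).trace_nonneg

theorem norm_inner_sq_add_norm_inner_sq_le {𝕜 E : Type*} [RCLike 𝕜] [NormedAddCommGroup E]
    [InnerProductSpace 𝕜 E] {u v : E} (hu : ‖u‖ ≤ 1) (hv : ‖v‖ ≤ 1) (x : E) :
    ‖⟪u, x⟫_𝕜‖ ^ 2 + ‖⟪v, x⟫_𝕜‖ ^ 2 ≤ (1 + ‖⟪u, v⟫_𝕜‖) * ‖x‖ ^ 2 := by
  set α := ⟪u, x⟫_𝕜
  set β := ⟪v, x⟫_𝕜
  set S := ‖α‖ ^ 2 + ‖β‖ ^ 2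
  -- `S = ⟪y, x⟫ ≤ ‖y‖ ‖x‖`, while `‖y‖² ≤ (1 + |⟪u, v⟫|) S`.
  set y := α • u + β • v
  have hyx : ⟪y, x⟫_𝕜 = (S : 𝕜) := by
    rw [inner_add_left, inner_smul_left, inner_smul_left]
    change starRingEnd 𝕜 α * α + starRingEnd 𝕜 β * β = _
    simp only [S, RCLike.conj_mul]
    push_cast; rfl
  have hS : S ≤ ‖y‖ * ‖x‖ := by
    simpa [hyx, abs_of_nonneg (by positivity : 0 ≤ S)] using norm_inner_le_norm (𝕜 := 𝕜) y x
  have hy : ‖y‖ ^ 2 ≤ (1 + ‖⟪u, v⟫_𝕜‖) * S := by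
    have hcross : RCLike.re ⟪α • u, β • v⟫_𝕜 ≤ ‖α‖ * ‖β‖ * ‖⟪u, v⟫_𝕜‖ := by
      refine (RCLike.re_le_norm _).trans_eq ?_
      rw [inner_smul_left, inner_smul_right, norm_mul, norm_mul, RCLike.norm_conj, mul_assoc]
    have hαu : ‖α • u‖ ≤ ‖α‖ := by
      rw [norm_smul]; exact mul_le_of_le_one_right (norm_nonneg _) hu
    have hβv : ‖β • v‖ ≤ ‖β‖ := by
      rw [norm_smul]; exact mul_le_of_le_one_right (norm_nonneg _) hv
    rw [norm_add_sq (𝕜 := 𝕜)]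
    nlinarith [norm_nonneg (α • u), norm_nonneg (β • v), norm_nonneg ⟪u, v⟫_𝕜,
      sq_nonneg (‖α‖ - ‖β‖), mul_nonneg (norm_nonneg α) (norm_nonneg β)]
  rcases (show 0 ≤ S by positivity).eq_or_lt with hS0 | hS0
  · rw [← hS0]; positivity
  · have : S * S ≤ S * ((1 + ‖⟪u, v⟫_𝕜‖) * ‖x‖ ^ 2) := by
      nlinarith [norm_nonneg y, norm_nonneg x]
    exact le_of_mul_le_mul_left this hS0

namespace Matrix

variable {𝕜 n : Type*} [RCLike 𝕜] [Fintype n]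

theorem star_dotProduct_vecMulVec_mulVec (u x : n → 𝕜) :
    star x ⬝ᵥ (vecMulVec u (star u) *ᵥ x) = ((‖star u ⬝ᵥ x‖ ^ 2 : ℝ) : 𝕜) := by
  rw [dotProduct_mulVec, vecMul_vecMulVec, smul_dotProduct, smul_eq_mul, star_dotProduct,
    RCLike.star_def, RCLike.conj_mul]
  push_cast; rfl

theorem trace_vecMulVec_mul_vecMulVec (u x : n → 𝕜) :
    (vecMulVec u (star u) * vecMulVec x (star x)).trace = ((‖star u ⬝ᵥ x‖ ^ 2 : ℝ) : 𝕜) := by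
  rw [mul_vecMulVec, trace_vecMulVec, dotProduct_comm, star_dotProduct_vecMulVec_mulVec]

theorem posSemidef_smul_one_sub_vecMulVec_sub_vecMulVec [DecidableEq n] {u v : n → 𝕜}
    (hu : star u ⬝ᵥ u = 1) (hv : star v ⬝ᵥ v = 1) {c : ℝ} (hc : 1 + ‖star u ⬝ᵥ v‖ ≤ c) :
    ((c : 𝕜) • 1 - vecMulVec u (star u) - vecMulVec v (star v)).PosSemidef := by
  refine .of_dotProduct_mulVec_nonneg ?_ fun x => ?_
  · simp [IsHermitian, conjTranspose_sub, conjTranspose_smul]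
  have hnorm (w : n → 𝕜) : star w ⬝ᵥ w = ((‖WithLp.toLp 2 w‖ ^ 2 : ℝ) : 𝕜) := by
    rw [RCLike.ofReal_pow, ← inner_self_eq_norm_sq_to_K, EuclideanSpace.inner_toLp_toLp,
      dotProduct_comm]
  have hunit {w : n → 𝕜} (hw : star w ⬝ᵥ w = 1) : ‖WithLp.toLp 2 w‖ ≤ 1 := by
    rw [hnorm, ← RCLike.ofReal_one, RCLike.ofReal_inj] at hw
    rw [← sq_le_one_iff₀ (norm_nonneg _), hw]
  have key := norm_inner_sq_add_norm_inner_sq_le (𝕜 := 𝕜) (hunit hu) (hunit hv) (WithLp.toLp 2 x)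
  simp only [EuclideanSpace.inner_toLp_toLp, dotProduct_comm _ (star _)] at key
  rw [sub_mulVec, sub_mulVec, smul_mulVec, one_mulVec, dotProduct_sub, dotProduct_sub,
    dotProduct_smul, star_dotProduct_vecMulVec_mulVec, star_dotProduct_vecMulVec_mulVec, hnorm,
    smul_eq_mul, ← RCLike.ofReal_mul, ← RCLike.ofReal_sub, ← RCLike.ofReal_sub,
    RCLike.ofReal_nonneg]
  nlinarith [norm_nonneg (WithLp.toLp 2 x)]

end Matrix

namespace QRG

variable {n S A : Type*} [Fintype n] [Fintype S] [Fintype A]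
  {ϱ : S → Matrix n n ℂ} {σ : S → A → ℝ}

theorem val_le_of_posSemidef_sum_smul [DecidableEq n] {c : ℝ}
    (hD : ∀ a, (∑ s, (c - σ s a) • ϱ s).PosSemidef) {P : A → Matrix n n ℂ}
    (hP : ∀ a, (P a).PosSemidef) (hZ : 0 < normZ ϱ P) : val ϱ σ P ≤ c := by
  have hdual (a : A) : 0 ≤ ∑ s, (c - σ s a) * (P a * ϱ s).trace.re := by
    have := (Complex.le_def.mp ((hP a).trace_mul_nonneg_s16 (hD a))).1
    simpa [Matrix.mul_sum, Matrix.trace_sum, Complex.re_sum] using this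
  have hval : val ϱ σ P = (∑ s, ∑ a, (P a * ϱ s).trace.re * σ s a) / normZ ϱ P := by
    simp only [val, induced, Finset.sum_div, div_mul_eq_mul_div]
  have hgap : c * normZ ϱ P - ∑ s, ∑ a, (P a * ϱ s).trace.re * σ s a =
      ∑ a, ∑ s, (c - σ s a) * (P a * ϱ s).trace.re := by
    simp only [normZ, Finset.mul_sum, ← Finset.sum_sub_distrib]
    rw [Finset.sum_comm]
    exact Finset.sum_congr rfl fun _ _ => Finset.sum_congr rfl fun _ _ => by ring
  rw [hval, div_le_iff₀ hZ]
  linarith [Finset.sum_nonneg fun a (_ : a ∈ Finset.univ) => hdual a]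

theorem normZ_single [DecidableEq A] (a₀ : A) (Q : Matrix n n ℂ) :
    normZ ϱ (Pi.single a₀ Q) = ∑ s, (Q * ϱ s).trace.re := by
  simp [normZ, Pi.single_apply, apply_ite]

theorem val_single [DecidableEq A] (a₀ : A) (Q : Matrix n n ℂ) :
    val ϱ σ (Pi.single a₀ Q) =
      (∑ s, (Q * ϱ s).trace.re * σ s a₀) / ∑ s, (Q * ϱ s).trace.re := by
  rw [val, Finset.sum_div]
  refine Finset.sum_congr rfl fun s _ => ?_
  simp [induced, normZ_single, Pi.single_apply, apply_ite, div_mul_eq_mul_div, ite_div]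

theorem sel_eq_of_forall_val_le {c : ℝ}
    (hle : ∀ P : A → Matrix n n ℂ, (∀ a, (P a).PosSemidef) → 0 < normZ ϱ P → val ϱ σ P ≤ c)
    {P₀ : A → Matrix n n ℂ} (hP₀ : ∀ a, (P₀ a).PosSemidef) (hZ₀ : 0 < normZ ϱ P₀)
    (hval₀ : val ϱ σ P₀ = c) : sel ϱ σ = c :=
  IsGreatest.csSup_eq ⟨⟨P₀, hP₀, hZ₀, hval₀.symm⟩, by
    rintro _ ⟨P, hP, hZ, rfl⟩
    exact hle P hP hZ⟩

end QRG

lemma ofReal_sqrt_two_inv_mul_self : ((√2 : ℝ) : ℂ)⁻¹ * ((√2 : ℝ) : ℂ)⁻¹ = 1 / 2 := by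
  rw [← mul_inv, ← Complex.ofReal_mul, Real.mul_self_sqrt zero_le_two]; norm_num

lemma star_pairKet_dotProduct_self (s : Bool × Bool × Bool) :
    star (pairKet s) ⬝ᵥ pairKet s = 1 := by
  obtain ⟨w, z, x⟩ := s
  cases w <;> cases z <;> cases x <;>
  simp [pairKet, xket, zket, dotProduct, Fintype.sum_prod_type, Fin.sum_univ_two,
    ofReal_sqrt_two_inv_mul_self] <;> norm_num

lemma sum_pairEns : ∑ s, pairEns s = (1 / 4 : ℂ) • 1 := by
  ext ⟨i, j⟩ ⟨k, l⟩
  simp only [Matrix.sum_apply, Fintype.sum_prod_type, Fintype.sum_bool]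
  fin_cases i <;> fin_cases j <;> fin_cases k <;> fin_cases l <;>
  simp [pairEns, pairKet, xket, zket, vecMulVec_apply, ofReal_sqrt_two_inv_mul_self] <;> norm_num

lemma re_trace_mul_pairEns (φ : Fin 2 × Fin 2 → ℂ) (s : Bool × Bool × Bool) :
    (vecMulVec φ (star φ) * pairEns s).trace.re = ‖star φ ⬝ᵥ pairKet s‖ ^ 2 / 8 := by
  rw [pairEns, Matrix.mul_smul, trace_smul, trace_vecMulVec_mul_vecMulVec, smul_eq_mul, mul_comm,
    ← RCLike.real_smul_eq_coe_mul, Complex.smul_re]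
  norm_num
  ring

lemma sum_re_trace_mul_pairEns (Q : Matrix (Fin 2 × Fin 2) (Fin 2 × Fin 2) ℂ) :
    ∑ s, (Q * pairEns s).trace.re = Q.trace.re / 4 := by
  rw [← Complex.re_sum, ← trace_sum, ← Matrix.mul_sum, sum_pairEns, Matrix.mul_smul, mul_one,
    trace_smul, smul_eq_mul]
  simp [Complex.mul_re]
  ring

def zxWinner (a : (Bool × Bool) × (Bool × Bool)) : Bool × Bool × Bool := (false, a.2.1, a.1.2)

def xzWinner (a : (Bool × Bool) × (Bool × Bool)) : Bool × Bool × Bool := (true, a.2.2, a.1.1)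

lemma sum_sigmaX_mul_sigmaZ_smul {M : Type*} [AddCommMonoid M] [Module ℝ M]
    (a : (Bool × Bool) × (Bool × Bool)) (f : Bool × Bool × Bool → M) :
    ∑ s, (sigmaX s a.1 * sigmaZ s a.2) • f s = f (zxWinner a) + f (xzWinner a) := by
  obtain ⟨⟨x₁, x₂⟩, z₁, z₂⟩ := a
  simp only [Fintype.sum_prod_type, Fintype.sum_bool]
  cases x₁ <;> cases x₂ <;> cases z₁ <;> cases z₂ <;>
    simp [sigmaX, sigmaZ, zxWinner, xzWinner, add_comm]

lemma norm_star_pairKet_zxWinner_dotProduct (a : (Bool × Bool) × (Bool × Bool)) :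
    ‖star (pairKet (zxWinner a)) ⬝ᵥ pairKet (xzWinner a)‖ = 1 / 2 := by
  obtain ⟨⟨x₁, x₂⟩, z₁, z₂⟩ := a
  cases x₁ <;> cases x₂ <;> cases z₁ <;> cases z₂ <;>
  simp [zxWinner, xzWinner, pairKet, xket, zket, dotProduct, Fintype.sum_prod_type,
    Fin.sum_univ_two, ofReal_sqrt_two_inv_mul_self]

lemma posSemidef_sum_smul_pairEns (a : (Bool × Bool) × (Bool × Bool)) :
    (∑ s, (3 / 4 - sigmaX s a.1 * sigmaZ s a.2) • pairEns s).PosSemidef := by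
  set u := pairKet (zxWinner a)
  set v := pairKet (xzWinner a)
  have hD : ∑ s, (3 / 4 - sigmaX s a.1 * sigmaZ s a.2) • pairEns s =
      (1 / 8 : ℝ) • (((3 / 2 : ℝ) : ℂ) • 1 - vecMulVec u (star u) - vecMulVec v (star v)) := by
    simp only [sub_smul, Finset.sum_sub_distrib, ← Finset.smul_sum, sum_sigmaX_mul_sigmaZ_smul]
    rw [sum_pairEns, pairEns, pairEns]
    push_cast
    module
  rw [hD]
  refine (posSemidef_smul_one_sub_vecMulVec_sub_vecMulVec (c := 3 / 2)
    (star_pairKet_dotProduct_self _) (star_pairKet_dotProduct_self _) ?_).smul (by norm_num)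
  rw [norm_star_pairKet_zxWinner_dotProduct]
  norm_num

noncomputable def optimalKet : Fin 2 × Fin 2 → ℂ :=
  pairKet (false, false, false) + pairKet (true, false, false)

lemma optimalKet_dotProduct_star_optimalKet : optimalKet ⬝ᵥ star optimalKet = 3 := by
  simp [optimalKet, pairKet, xket, zket, dotProduct, Fintype.sum_prod_type, Fin.sum_univ_two,
    ofReal_sqrt_two_inv_mul_self]
  linear_combination 4 * ofReal_sqrt_two_inv_mul_self

lemma star_optimalKet_dotProduct_pairKet_zx :
    star optimalKet ⬝ᵥ pairKet (false, false, false) = 3 / 2 := by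
  simp [optimalKet, pairKet, xket, zket, dotProduct, Fintype.sum_prod_type, Fin.sum_univ_two,
    ofReal_sqrt_two_inv_mul_self]
  linear_combination 2 * ofReal_sqrt_two_inv_mul_self

lemma star_optimalKet_dotProduct_pairKet_xz :
    star optimalKet ⬝ᵥ pairKet (true, false, false) = 3 / 2 := by
  simp [optimalKet, pairKet, xket, zket, dotProduct, Fintype.sum_prod_type, Fin.sum_univ_two,
    ofReal_sqrt_two_inv_mul_self]
  linear_combination 2 * ofReal_sqrt_two_inv_mul_self

lemma sum_re_trace_optimalKet_mul_pairEns :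
    ∑ s, (vecMulVec optimalKet (star optimalKet) * pairEns s).trace.re = 3 / 4 := by
  rw [sum_re_trace_mul_pairEns, trace_vecMulVec, optimalKet_dotProduct_star_optimalKet]
  norm_num

lemma val_single_optimalKet :
    val pairEns (fun s (a : (Bool × Bool) × (Bool × Bool)) => sigmaX s a.1 * sigmaZ s a.2)
        (Pi.single ((false, false), (false, false)) (vecMulVec optimalKet (star optimalKet))) =
      3 / 4 := by
  have hwin := sum_sigmaX_mul_sigmaZ_smul ((false, false), (false, false))
    fun s => (vecMulVec optimalKet (star optimalKet) * pairEns s).trace.re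
  simp only [smul_eq_mul, mul_comm (sigmaX _ _ * _)] at hwin
  rw [val_single, sum_re_trace_optimalKet_mul_pairEns, hwin, re_trace_mul_pairEns,
    re_trace_mul_pairEns]
  simp only [zxWinner, xzWinner, star_optimalKet_dotProduct_pairKet_zx,
    star_optimalKet_dotProduct_pairKet_xz]
  norm_num

/-- Value of the conjunction qubit-pair game `G_∧`, with utility
`σ_∧(s,(a_X,a_Z)) = σ_X(s,a_X)·σ_Z(s,a_Z)`: the selective value is `3/4`. -/
theorem conjunction_game_value :
    sel pairEns
      (fun s (a : (Bool × Bool) × (Bool × Bool)) => sigmaX s a.1 * sigmaZ s a.2) =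
      3/4 := by
  refine sel_eq_of_forall_val_le
    (fun P hP hZ => val_le_of_posSemidef_sum_smul posSemidef_sum_smul_pairEns hP hZ)
    (fun a => ?_) ?_ val_single_optimalKet
  · rw [Pi.single_apply]
    split_ifs
    exacts [posSemidef_vecMulVec_self_star _, .zero]
  · rw [normZ_single, sum_re_trace_optimalKet_mul_pairEns]
    norm_num
end
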